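/- Under the assumptions of the previous statement (0 ≤ c′‖δ‖₂² ≤ (η/2)‖δ‖₁ + η(‖Φ‖₁ − ‖Φ+δ‖₁) with Φ supported on I, |I| = s, c′ > 0, η > 0), one has ‖δ‖₂ ≤ 8√s · η / c′ and hence ‖δ‖₁ ≤ 32 s η / c′. -/

import Mathlib

/-!
Since `Φ` vanishes off `I`, the triangle inequality on `I` gives
`‖Φ‖₁ - ‖Φ + δ‖₁ ≤ ‖δ_I‖₁ - ‖δ_{Iᶜ}‖₁`, so the hypothesis becomes
`c' ‖δ‖₂² ≤ (3/2) η ‖δ_I‖₁ - (η/2) ‖δ_{Iᶜ}‖₁`. Its right-hand side must be nonnegative, which is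
the cone condition `‖δ_{Iᶜ}‖₁ ≤ 3 ‖δ_I‖₁`. Cauchy–Schwarz on `I` gives `‖δ_I‖₁ ≤ √s ‖δ‖₂`, hence
`c' ‖δ‖₂² ≤ (3/2) η √s ‖δ‖₂`, i.e. `‖δ‖₂ ≤ (3/2) √s η / c'`, and then
`‖δ‖₁ ≤ 4 ‖δ_I‖₁ ≤ 4 √s ‖δ‖₂ ≤ 6 s η / c'`.
-/

open Finset

theorem sum_norm_sub_sum_norm_add_le {ι E : Type*} [Fintype ι] [DecidableEq ι]
    [SeminormedAddCommGroup E] {Φ : ι → E} {I : Finset ι} (hΦ : ∀ i ∉ I, Φ i = 0) (δ : ι → E) :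
    ∑ i, ‖Φ i‖ - ∑ i, ‖Φ i + δ i‖ ≤ ∑ i ∈ I, ‖δ i‖ - ∑ i ∈ Iᶜ, ‖δ i‖ := by
  have on_support : ∑ i ∈ I, (‖Φ i‖ - ‖Φ i + δ i‖) ≤ ∑ i ∈ I, ‖δ i‖ :=
    sum_le_sum fun i _ => by simpa using norm_sub_norm_le (Φ i) (Φ i + δ i)
  have off_support : ∑ i ∈ Iᶜ, (‖Φ i‖ - ‖Φ i + δ i‖) = -∑ i ∈ Iᶜ, ‖δ i‖ := by
    rw [← sum_neg_distrib]
    exact sum_congr rfl fun i hi => by simp [hΦ i (mem_compl.mp hi)]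
  rw [← sum_sub_distrib, ← sum_add_sum_compl I, off_support]
  linarith

theorem sum_abs_le_sqrt_card_mul_sqrt_sum_sq {ι : Type*} [Fintype ι] (I : Finset ι)
    (δ : ι → ℝ) : ∑ i ∈ I, |δ i| ≤ √(#I : ℝ) * √(∑ i, δ i ^ 2) := by
  rw [← Real.sqrt_mul (Nat.cast_nonneg _)]
  apply Real.le_sqrt_of_sq_le
  calc (∑ i ∈ I, |δ i|) ^ 2 ≤ #I * ∑ i ∈ I, |δ i| ^ 2 := sq_sum_le_card_mul_sum_sq
    _ ≤ #I * ∑ i, δ i ^ 2 := by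
      simp only [sq_abs]
      exact mul_le_mul_of_nonneg_left (sum_le_univ_sum_of_nonneg fun i => sq_nonneg _)
        (Nat.cast_nonneg _)

theorem le_div_of_mul_sq_le_mul {x a c : ℝ} (hx : 0 ≤ x) (ha : 0 ≤ a) (hc : 0 < c)
    (h : c * x ^ 2 ≤ a * x) : x ≤ a / c := by
  rcases hx.eq_or_lt with rfl | hx
  · positivity
  · rw [le_div_iff₀ hc]
    nlinarith

section Lasso

variable {ι : Type*} [Fintype ι] [DecidableEq ι] {c' η : ℝ} {Φ δ : ι → ℝ} {I : Finset ι}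

theorem lasso_basic_inequality (hη : 0 < η) (hΦ : ∀ i ∉ I, Φ i = 0)
    (h : c' * ∑ i, δ i ^ 2 ≤ η / 2 * ∑ i, |δ i| + η * (∑ i, |Φ i| - ∑ i, |Φ i + δ i|)) :
    c' * ∑ i, δ i ^ 2 ≤ 3 / 2 * η * ∑ i ∈ I, |δ i| - η / 2 * ∑ i ∈ Iᶜ, |δ i| := by
  have decrease := sum_norm_sub_sum_norm_add_le hΦ δ
  simp only [Real.norm_eq_abs] at decrease
  have split : ∑ i, |δ i| = ∑ i ∈ I, |δ i| + ∑ i ∈ Iᶜ, |δ i| := (sum_add_sum_compl I _).symm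
  rw [split] at h
  nlinarith [mul_le_mul_of_nonneg_left decrease hη.le]

theorem lasso_cone (hc' : 0 < c') (hη : 0 < η) (hΦ : ∀ i ∉ I, Φ i = 0)
    (h : c' * ∑ i, δ i ^ 2 ≤ η / 2 * ∑ i, |δ i| + η * (∑ i, |Φ i| - ∑ i, |Φ i + δ i|)) :
    ∑ i ∈ Iᶜ, |δ i| ≤ 3 * ∑ i ∈ I, |δ i| := by
  have basic := lasso_basic_inequality hη hΦ h
  have quadratic_nonneg : 0 ≤ c' * ∑ i, δ i ^ 2 := by positivity
  nlinarith

theorem lasso_l2_bound (hc' : 0 < c') (hη : 0 < η) (hΦ : ∀ i ∉ I, Φ i = 0)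
    (h : c' * ∑ i, δ i ^ 2 ≤ η / 2 * ∑ i, |δ i| + η * (∑ i, |Φ i| - ∑ i, |Φ i + δ i|)) :
    √(∑ i, δ i ^ 2) ≤ 3 / 2 * √(#I : ℝ) * η / c' := by
  have basic := lasso_basic_inequality hη hΦ h
  have cauchy_schwarz := sum_abs_le_sqrt_card_mul_sqrt_sum_sq I δ
  apply le_div_of_mul_sq_le_mul (Real.sqrt_nonneg _) (by positivity) hc'
  rw [Real.sq_sqrt (by positivity)]
  have off_support_nonneg : 0 ≤ ∑ i ∈ Iᶜ, |δ i| := by positivity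
  nlinarith

theorem lasso_l1_bound (hc' : 0 < c') (hη : 0 < η) (hΦ : ∀ i ∉ I, Φ i = 0)
    (h : c' * ∑ i, δ i ^ 2 ≤ η / 2 * ∑ i, |δ i| + η * (∑ i, |Φ i| - ∑ i, |Φ i + δ i|)) :
    ∑ i, |δ i| ≤ 6 * #I * η / c' := by
  have cone := lasso_cone hc' hη hΦ h
  have l2 := lasso_l2_bound hc' hη hΦ h
  have cauchy_schwarz := sum_abs_le_sqrt_card_mul_sqrt_sum_sq I δ
  have hI : √(#I : ℝ) * √(#I : ℝ) = #I := Real.mul_self_sqrt (Nat.cast_nonneg _)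
  calc ∑ i, |δ i| ≤ 4 * ∑ i ∈ I, |δ i| := by rw [← sum_add_sum_compl I]; linarith
    _ ≤ 4 * √(#I : ℝ) * √(∑ i, δ i ^ 2) := by linarith
    _ ≤ 4 * √(#I : ℝ) * (3 / 2 * √(#I : ℝ) * η / c') := by gcongr
    _ = 6 * (√(#I : ℝ) * √(#I : ℝ)) * η / c' := by ring
    _ = 6 * #I * η / c' := by rw [hI]

end Lasso

theorem lasso_error_rate_general (d s : ℕ) (c' eta : ℝ) (hc' : 0 < c') (heta : 0 < eta)
    (Phi delta : Fin d → ℝ) (I : Finset (Fin d)) (hPhi : ∀ i ∉ I, Phi i = 0)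
    (hI : I.card = s)
    (h2 : c' * ∑ i, (delta i)^2 ≤
      (eta / 2) * ∑ i, |delta i| +
        eta * ((∑ i, |Phi i|) - ∑ i, |Phi i + delta i|)) :
    Real.sqrt (∑ i, (delta i)^2) ≤ 8 * Real.sqrt s * eta / c' ∧
      ∑ i, |delta i| ≤ 32 * s * eta / c' := by
  subst hI
  constructor
  · calc √(∑ i, delta i ^ 2) ≤ 3 / 2 * √(#I : ℝ) * eta / c' := lasso_l2_bound hc' heta hPhi h2
      _ ≤ 8 * √(#I : ℝ) * eta / c' := by gcongr; norm_num
  · calc ∑ i, |delta i| ≤ 6 * #I * eta / c' := lasso_l1_bound hc' heta hPhi h2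
      _ ≤ 32 * #I * eta / c' := by gcongr; norm_num

theorem lasso_error_rate (d s : ℕ) (c' eta : ℝ) (hc' : 0 < c') (heta : 0 < eta)
    (Phi delta : Fin d → ℝ) (I : Finset (Fin d)) (hPhi : ∀ i ∉ I, Phi i = 0)
    (hI : I.card = s)
    (h1 : 0 ≤ c' * ∑ i, (delta i)^2)
    (h2 : c' * ∑ i, (delta i)^2 ≤
      (eta / 2) * ∑ i, |delta i| +
        eta * ((∑ i, |Phi i|) - ∑ i, |Phi i + delta i|)) :
    Real.sqrt (∑ i, (delta i)^2) ≤ 8 * Real.sqrt s * eta / c' ∧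
      ∑ i, |delta i| ≤ 32 * s * eta / c' :=
  lasso_error_rate_general d s c' eta hc' heta Phi delta I hPhi hI h2
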